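/- arXiv:2601.10422 — 5 statements merged into one kernel-verified Lean document; each statement's English description precedes it below -/
import Mathlib

section
/- For every (G,L,K,F,Z,S) MIMO-PDA P, the sum-DoF satisfies K(F−Z)/S ≤ GKZ/F + G⌈L/G⌉. In other words, any MIMO-PDA realizing memory ratio Z/F has sum-DoF at most G·K·(Z/F) + G⌈L/G⌉. -/
open Finset

/-- Ceiling division `⌈a / b⌉` on naturals. -/
def cdiv (a b : ℕ) : ℕ := (a + b - 1) / b

/-- `⟨a⟩_q`: the least positive residue of `a` modulo `q` when `q ∤ a`, and `q` when `q ∣ a`. -/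
def modRes (a q : ℕ) : ℕ := if q ∣ a then q else a % q

section PDA

variable {α κ σ : Type*} [Fintype α] [Fintype κ] [DecidableEq σ]

/-- The set of integer symbols occurring in the array `P` (the star `*` is `none`). -/
def pdaSymbols (P : α → κ → Option σ) : Finset σ :=
  Finset.univ.biUnion fun f : α => Finset.univ.biUnion fun k : κ => (P f k).toFinset

/-- The set of columns of the subarray `P^(s)` (columns of `P` containing `s`). -/
def pdaColsOf (P : α → κ → Option σ) (s : σ) : Finset κ :=
  Finset.univ.filter fun k => ∃ f, P f k = some s

/-- `𝒫^{(s)}_f`: the columns of `P^(s)` whose entry in row `f` is an integer. -/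
def pdaIntCols (P : α → κ → Option σ) (s : σ) (f : α) : Finset κ :=
  (pdaColsOf P s).filter fun k => P f k ≠ none

/-- A `(G,L,K,F,Z,S)` MIMO placement delivery array: an `F × K` array over `'*'` and
`S` distinct integer symbols satisfying conditions C1–C4. -/
def IsMIMOPDA (G L K F Z S : ℕ) (P : α → κ → Option σ) : Prop :=
  Fintype.card α = F ∧ Fintype.card κ = K ∧
  -- C2: exactly `S` distinct integers occur, each at least once
  (pdaSymbols P).card = S ∧
  -- C1: each column contains exactly `Z` stars
  (∀ k : κ, (Finset.univ.filter fun f : α => P f k = none).card = Z) ∧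
  -- C3: each integer occurs at most `G` times in each column
  (∀ (s : σ) (k : κ), (Finset.univ.filter fun f : α => P f k = some s).card ≤ G) ∧
  -- C4 (a)
  (∀ (s : σ) (f : α), (∃ k, P f k = some s) → (pdaIntCols P s f).card ≤ cdiv L G) ∧
  -- C4 (b)
  (∀ (s : σ) (k : κ) (T : Finset α), T.card = modRes L G + 1 →
    (∀ f ∈ T, P f k = some s) →
    ∃ f ∈ T, ∃ f' ∈ T, pdaIntCols P s f ≠ pdaIntCols P s f')

/-- The consistency number of an array. -/
noncomputable def consistNum (P : α → κ → Option σ) : ℕ :=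
  sSup {μ : ℕ | ∃ (s : σ) (k : κ) (T : Finset α), T.card = μ ∧
    (∀ f ∈ T, P f k = some s) ∧
    ∀ f ∈ T, ∀ f' ∈ T, pdaIntCols P s f = pdaIntCols P s f'}

end PDA

/-- The sum-DoF `K (F - Z) / S` as a rational number. -/
def sumDoF (K F Z S : ℕ) : ℚ := ((K * (F - Z) : ℕ) : ℚ) / (S : ℚ)
/-- Theorem 2 upper bound on the sum-DoF: for every
`(G,L,K,F,Z,S)` MIMO-PDA `P`, the sum-DoF satisfies
`K(F-Z)/S ≤ G·K·Z/F + G·⌈L/G⌉`. -/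
theorem statement0 {α κ σ : Type*} [Fintype α] [Fintype κ] [DecidableEq σ]
    (G L K F Z S : ℕ) (hG : 0 < G) (hL : 0 < L) (hK : 0 < K)
    (hF : 0 < F) (hZ : 0 < Z) (hS : 0 < S)
    (P : α → κ → Option σ) (hP : IsMIMOPDA G L K F Z S P) :
    sumDoF K F Z S ≤ (G : ℚ) * K * Z / F + (G : ℚ) * (cdiv L G : ℚ) := by
  classical
  obtain ⟨hcA, hcK, hcS, hC1, hC3, hC4a, -⟩ := hP
  set c := cdiv L G with hcdef
  set occR : σ → α → ℕ := fun s f => (univ.filter fun k => P f k = some s).card with hoccR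
  set occC : σ → κ → ℕ := fun s k => (univ.filter fun f => P f k = some s).card with hoccC
  set n : σ → ℕ := fun s => ∑ f, occR s f with hn
  set rs : α → ℕ := fun f => (univ.filter fun k => P f k = none).card with hrs
  set nz : α → ℕ := fun f => (univ.filter fun k => P f k ≠ none).card with hnz
  set cz : κ → ℕ := fun k => (univ.filter fun f => P f k ≠ none).card with hcz
  set t : σ → ℕ := fun s => (pdaColsOf P s).card with ht
  set Sym : Finset σ := pdaSymbols P with hSymdef
  have hκne : Nonempty κ := Fintype.card_pos_iff.mp (by rw [hcK]; exact hK)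
  obtain ⟨k0⟩ := hκne
  have hZF : Z ≤ F := by
    calc Z = (univ.filter fun f : α => P f k0 = none).card := (hC1 k0).symm
    _ ≤ (univ : Finset α).card := card_filter_le _ _
    _ = F := by rw [card_univ, hcA]
  obtain ⟨E, hE⟩ : ∃ E, F = Z + E := ⟨F - Z, by omega⟩
  set D := K * E with hD
  have hrow : ∀ f : α, rs f + nz f = K := by
    intro f
    have := Finset.card_filter_add_card_filter_not
      (s := (univ : Finset κ)) (p := fun k => P f k = none)
    simpa [card_univ, hcK, hrs, hnz] using this
  have hcol : ∀ k : κ, Z + cz k = F := by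
    intro k
    have := Finset.card_filter_add_card_filter_not
      (s := (univ : Finset α)) (p := fun f => P f k = none)
    rw [hC1 k] at this
    simpa [card_univ, hcA, hcz] using this
  have hcolE : ∀ k : κ, cz k = E := fun k => by have := hcol k; omega
  have hstars : ∑ f : α, rs f = K * Z := by
    simp only [hrs, Finset.card_filter]
    rw [Finset.sum_comm]
    have h1 : ∀ k : κ, (∑ f : α, if P f k = none then 1 else 0) = Z := by
      intro k
      rw [← Finset.card_filter]
      exact hC1 k
    rw [Finset.sum_congr rfl fun k _ => h1 k]
    simp [card_univ, hcK]
  have hnztot : ∑ f : α, nz f = D := by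
    simp only [hnz, Finset.card_filter]
    rw [Finset.sum_comm]
    have h1 : ∀ k : κ, (∑ f : α, if P f k ≠ none then 1 else 0) = E := by
      intro k
      rw [← Finset.card_filter]
      exact hcolE k
    rw [Finset.sum_congr rfl fun k _ => h1 k]
    simp [card_univ, hcK, hD, mul_comm]
  have hswap : ∀ s : σ, n s = ∑ k : κ, occC s k := by
    intro s
    simp only [hn, hoccR, hoccC, Finset.card_filter]
    exact Finset.sum_comm
  have hfibrow : ∀ f : α, (∑ s ∈ Sym, occR s f) ≤ nz f := by
    intro f
    have hdisj : ∀ s₁ ∈ Sym, ∀ s₂ ∈ Sym, s₁ ≠ s₂ →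
        Disjoint (univ.filter fun k => P f k = some s₁)
          (univ.filter fun k => P f k = some s₂) := by
      intro s₁ _ s₂ _ hne
      rw [Finset.disjoint_left]
      intro k hk1 hk2
      simp only [mem_filter] at hk1 hk2
      apply hne
      have := hk1.2.symm.trans hk2.2
      exact Option.some_injective σ this
    calc (∑ s ∈ Sym, occR s f)
        = (Sym.biUnion fun s => univ.filter fun k => P f k = some s).card :=
          (Finset.card_biUnion hdisj).symm
      _ ≤ nz f := by
          apply Finset.card_le_card
          intro k hk
          simp only [Finset.mem_biUnion, mem_filter] at hk
          obtain ⟨s, -, -, hks⟩ := hk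
          simp only [hnz, mem_filter, mem_univ, true_and]
          simp [hks]
  have hfibcol : ∀ k : κ, cz k ≤ ∑ s ∈ Sym, occC s k := by
    intro k
    calc cz k ≤ (Sym.biUnion fun s => univ.filter fun f => P f k = some s).card := by
          apply Finset.card_le_card
          intro f hf
          simp only [hcz, mem_filter, mem_univ, true_and] at hf
          obtain ⟨s, hs⟩ := Option.ne_none_iff_exists'.mp hf
          rw [Finset.mem_biUnion]
          refine ⟨s, ?_, by simp [hs]⟩
          simp only [hSymdef, pdaSymbols, Finset.mem_biUnion]
          exact ⟨f, mem_univ f, k, mem_univ k, by simp [hs]⟩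
      _ ≤ ∑ s ∈ Sym, occC s k := Finset.card_biUnion_le
  have hDlen : D ≤ ∑ s ∈ Sym, n s := by
    calc D = ∑ k : κ, cz k := by
          rw [Finset.sum_congr rfl fun k _ => hcolE k]
          simp [card_univ, hcK, hD, mul_comm]
      _ ≤ ∑ k : κ, ∑ s ∈ Sym, occC s k := Finset.sum_le_sum fun k _ => hfibcol k
      _ = ∑ s ∈ Sym, ∑ k : κ, occC s k := Finset.sum_comm
      _ = ∑ s ∈ Sym, n s := Finset.sum_congr rfl fun s _ => (hswap s).symm
  have hnleD : ∑ s ∈ Sym, n s ≤ D := by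
    calc ∑ s ∈ Sym, n s = ∑ f : α, ∑ s ∈ Sym, occR s f := Finset.sum_comm
      _ ≤ ∑ f : α, nz f := Finset.sum_le_sum fun f _ => hfibrow f
      _ = D := hnztot
  have hnGt : ∀ s : σ, n s ≤ G * t s := by
    intro s
    have hzero : ∀ k ∈ (univ : Finset κ), k ∉ pdaColsOf P s → occC s k = 0 := by
      intro k _ hk
      simp only [pdaColsOf, mem_filter, mem_univ, true_and] at hk
      push_neg at hk
      simp only [hoccC, Finset.card_eq_zero, Finset.filter_eq_empty_iff]
      intro f _
      exact hk f
    calc n s = ∑ k ∈ pdaColsOf P s, occC s k := by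
          rw [hswap s, ← Finset.sum_subset (Finset.subset_univ _) hzero]
      _ ≤ (pdaColsOf P s).card * G :=
          Finset.sum_le_card_nsmul _ _ G fun k _ => hC3 s k
      _ = G * t s := by rw [ht, mul_comm]
  have hts : ∀ (s : σ) (f : α), occR s f ≠ 0 → t s ≤ c + rs f := by
    intro s f hne
    have hex : ∃ k, P f k = some s := by
      rw [hoccR, ← Nat.pos_iff_ne_zero, Finset.card_pos] at hne
      obtain ⟨k, hk⟩ := hne
      simp only [mem_filter] at hk
      exact ⟨k, hk.2⟩
    have hsub : pdaColsOf P s ⊆ pdaIntCols P s f ∪ (univ.filter fun k => P f k = none) := by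
      intro k hk
      rcases eq_or_ne (P f k) none with h | h
      · exact Finset.mem_union_right _ (by simp [h])
      · exact Finset.mem_union_left _ (by simp [pdaIntCols, hk, h])
    calc t s ≤ (pdaIntCols P s f ∪ (univ.filter fun k => P f k = none)).card :=
          Finset.card_le_card hsub
      _ ≤ (pdaIntCols P s f).card + (univ.filter fun k => P f k = none).card :=
          Finset.card_union_le _ _
      _ ≤ c + rs f := Nat.add_le_add (hC4a s f hex) le_rfl
  have hn2 : ∀ s : σ, n s ^ 2 ≤ G * (c * n s + ∑ f : α, occR s f * rs f) := by
    intro s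
    have h1 : n s * t s ≤ c * n s + ∑ f : α, occR s f * rs f := by
      calc n s * t s = ∑ f : α, occR s f * t s := by rw [hn, Finset.sum_mul]
        _ ≤ ∑ f : α, occR s f * (c + rs f) := by
            apply Finset.sum_le_sum
            intro f _
            rcases eq_or_ne (occR s f) 0 with h | h
            · simp [h]
            · exact Nat.mul_le_mul_left _ (hts s f h)
        _ = c * n s + ∑ f : α, occR s f * rs f := by
            simp only [hn, Nat.mul_add, Finset.sum_add_distrib, Finset.mul_sum]
            congr 1
            exact Finset.sum_congr rfl fun f _ => mul_comm _ _
    calc n s ^ 2 = n s * n s := by rw [sq]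
      _ ≤ (G * t s) * n s := Nat.mul_le_mul_right _ (hnGt s)
      _ = G * (n s * t s) := by ring
      _ ≤ G * (c * n s + ∑ f : α, occR s f * rs f) := Nat.mul_le_mul_left _ h1
  have hCS : (∑ s ∈ Sym, n s) ^ 2 ≤ S * ∑ s ∈ Sym, n s ^ 2 := by
    have := sq_sum_le_card_mul_sum_sq (s := Sym) (f := n)
    rwa [hcS] at this
  have hinner : ∑ s ∈ Sym, ∑ f : α, occR s f * rs f ≤ ∑ f : α, rs f * nz f := by
    calc ∑ s ∈ Sym, ∑ f : α, occR s f * rs f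
        = ∑ f : α, (∑ s ∈ Sym, occR s f) * rs f := by
          rw [Finset.sum_comm]
          exact Finset.sum_congr rfl fun f _ => (Finset.sum_mul _ _ _).symm
      _ ≤ ∑ f : α, nz f * rs f :=
          Finset.sum_le_sum fun f _ => Nat.mul_le_mul_right _ (hfibrow f)
      _ = ∑ f : α, rs f * nz f := Finset.sum_congr rfl fun f _ => mul_comm _ _
  set W := ∑ f : α, rs f * nz f with hW
  have hJ : F * W + (K * Z) ^ 2 ≤ F * (K * (K * Z)) := by
    have hCSr : (∑ f : α, rs f) ^ 2 ≤ F * ∑ f : α, rs f ^ 2 := by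
      have := sq_sum_le_card_mul_sum_sq (s := (univ : Finset α)) (f := rs)
      rwa [card_univ, hcA] at this
    calc F * W + (K * Z) ^ 2 = F * W + (∑ f : α, rs f) ^ 2 := by rw [hstars]
      _ ≤ F * W + F * ∑ f : α, rs f ^ 2 := Nat.add_le_add_left hCSr _
      _ = F * ∑ f : α, (rs f * nz f + rs f ^ 2) := by
          rw [hW, ← Nat.mul_add, Finset.sum_add_distrib]
      _ = F * ∑ f : α, rs f * K := by
          congr 1
          refine Finset.sum_congr rfl fun f _ => ?_
          rw [← hrow f]; ring
      _ = F * (K * (K * Z)) := by rw [← Finset.sum_mul, hstars]; ring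
  have hFW : F * W ≤ K * Z * D := by
    have h2 : F * W + (K * Z) ^ 2 ≤ K * Z * D + (K * Z) ^ 2 := by
      calc F * W + (K * Z) ^ 2 ≤ F * (K * (K * Z)) := hJ
        _ = K * Z * D + (K * Z) ^ 2 := by rw [hE, hD]; ring
    exact Nat.le_of_add_le_add_right h2
  have hmain : F * D ^ 2 ≤ S * G * (D * (c * F + K * Z)) := by
    have h3 : D ^ 2 ≤ S * G * (c * D + ∑ s ∈ Sym, ∑ f : α, occR s f * rs f) := by
      calc D ^ 2 ≤ (∑ s ∈ Sym, n s) ^ 2 := Nat.pow_le_pow_left hDlen 2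
        _ ≤ S * ∑ s ∈ Sym, n s ^ 2 := hCS
        _ ≤ S * ∑ s ∈ Sym, G * (c * n s + ∑ f : α, occR s f * rs f) :=
            Nat.mul_le_mul_left _ (Finset.sum_le_sum fun s _ => hn2 s)
        _ = S * G * (c * (∑ s ∈ Sym, n s) + ∑ s ∈ Sym, ∑ f : α, occR s f * rs f) := by
            rw [← Finset.mul_sum, Finset.sum_add_distrib, ← Finset.mul_sum, mul_assoc]
        _ ≤ S * G * (c * D + ∑ s ∈ Sym, ∑ f : α, occR s f * rs f) :=
            Nat.mul_le_mul_left _ (Nat.add_le_add_right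
              (Nat.mul_le_mul_left _ hnleD) _)
    calc F * D ^ 2 ≤ F * (S * G * (c * D + ∑ s ∈ Sym, ∑ f : α, occR s f * rs f)) :=
          Nat.mul_le_mul_left _ h3
      _ = S * G * (c * D * F + F * (∑ s ∈ Sym, ∑ f : α, occR s f * rs f)) := by ring
      _ ≤ S * G * (c * D * F + F * W) :=
          Nat.mul_le_mul_left _ (Nat.add_le_add_left (Nat.mul_le_mul_left _ hinner) _)
      _ ≤ S * G * (c * D * F + K * Z * D) :=
          Nat.mul_le_mul_left _ (Nat.add_le_add_left hFW _)
      _ = S * G * (D * (c * F + K * Z)) := by ring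
  have hkey : D * F ≤ S * G * (c * F + K * Z) := by
    rcases Nat.eq_zero_or_pos D with h | hDpos
    · simp [h]
    · have h4 : D * (D * F) ≤ D * (S * G * (c * F + K * Z)) := by
        calc D * (D * F) = F * D ^ 2 := by ring
          _ ≤ S * G * (D * (c * F + K * Z)) := hmain
          _ = D * (S * G * (c * F + K * Z)) := by ring
      exact Nat.le_of_mul_le_mul_left h4 hDpos
  have hFZE : F - Z = E := by omega
  have hFQ : (0 : ℚ) < F := by exact_mod_cast hF
  have hSQ : (0 : ℚ) < S := by exact_mod_cast hS
  have hkeyQ : (D : ℚ) * F ≤ S * G * (c * F + K * Z) := by exact_mod_cast hkey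
  rw [sumDoF, hFZE]
  have hDQ : ((K * E : ℕ) : ℚ) = (D : ℚ) := by rw [hD]
  rw [hDQ, div_le_iff₀ hSQ]
  rw [show (G : ℚ) * K * Z / F + G * c = G * (c * F + K * Z) / F by field_simp; ring]
  rw [div_mul_eq_mul_div, le_div_iff₀ hFQ]
  calc (D : ℚ) * F ≤ S * G * (c * F + K * Z) := hkeyQ
    _ = G * (c * F + K * Z) * S := by ring
end

section
/- Let Q be a (G, L₁, K₁, F, Z, S) MIMO-PDA with consistency number μ whose sum-DoF K₁(F−Z)/S equals the upper bound G·K₁·Z/F + G⌈L₁/G⌉ (with t₁ := K₁Z/F a positive integer). Then for every positive integer m and every integer L ≥ L₁ satisfying m⌈L₁/G⌉ = ⌈L/G⌉ and ⟨L⟩_G ≥ μ, the F × mK₁ array obtained by concatenating m copies of Q horizontally is a (G, L, mK₁, F, Z, S) MIMO-PDA whose sum-DoF mK₁(F−Z)/S equals G·m·t₁ + G⌈L/G⌉, i.e., it again attains the maximum sum-DoF. -/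
open Finset

/-- The `F × (m·K₁)` array obtained by concatenating `m` copies of `P` horizontally. -/
def hcopies {F K₁ : ℕ} {σ : Type*} (m : ℕ) (hK₁ : 0 < K₁)
    (P : Fin F → Fin K₁ → Option σ) (f : Fin F) (k : Fin (m * K₁)) : Option σ :=
  P f ⟨k.val % K₁, Nat.mod_lt _ hK₁⟩

lemma mem_pdaSymbols {α κ σ : Type*} [Fintype α] [Fintype κ] [DecidableEq σ]
    {P : α → κ → Option σ} {s : σ} :
    s ∈ pdaSymbols P ↔ ∃ f k, P f k = some s := by
  simp [pdaSymbols, Option.mem_toFinset, eq_comm]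

lemma mem_pdaIntCols {α κ σ : Type*} [Fintype α] [Fintype κ] [DecidableEq σ]
    {P : α → κ → Option σ} {s : σ} {f : α} {k : κ} :
    k ∈ pdaIntCols P s f ↔ (∃ f', P f' k = some s) ∧ P f k ≠ none := by
  simp [pdaIntCols, pdaColsOf]

-- the mod map
def gmap (m K₁ : ℕ) (hK₁ : 0 < K₁) (k : Fin (m * K₁)) : Fin K₁ :=
  ⟨k.val % K₁, Nat.mod_lt _ hK₁⟩

lemma fiber_card (m K₁ : ℕ) (hK₁ : 0 < K₁) (a : Fin K₁) :
    (Finset.univ.filter fun k : Fin (m * K₁) => gmap m K₁ hK₁ k = a).card = m := by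
  have h : (Finset.univ.filter fun k : Fin (m * K₁) => gmap m K₁ hK₁ k = a).card
      = (Finset.univ : Finset (Fin m)).card := by
    refine Finset.card_nbij' (fun k => ⟨k.val / K₁, (Nat.div_lt_iff_lt_mul hK₁).2 k.isLt⟩)
      (fun j => ⟨a.val + j.val * K₁, ?_⟩) ?_ ?_ ?_ ?_
    · calc a.val + j.val * K₁ < K₁ + j.val * K₁ := Nat.add_lt_add_right a.isLt _
        _ = (j.val + 1) * K₁ := by ring
        _ ≤ m * K₁ := Nat.mul_le_mul_right _ j.isLt
    · intro k hk; simp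
    · intro j hj
      simp only [Finset.mem_filter, Finset.mem_univ, true_and, gmap, Fin.ext_iff]
      simp [Nat.add_mul_mod_self_right, Nat.mod_eq_of_lt a.isLt]
    · intro k hk
      simp only [Finset.mem_coe, Finset.mem_filter, Finset.mem_univ, true_and, gmap, Fin.ext_iff] at hk
      apply Fin.ext
      simp only []
      rw [← hk]
      exact Nat.mod_add_div' k.val K₁
    · intro j hj
      apply Fin.ext
      simp only []
      rw [Nat.add_mul_div_right _ _ hK₁, Nat.div_eq_of_lt a.isLt, Nat.zero_add]
  simpa using h

lemma card_filter_gmap (m K₁ : ℕ) (hK₁ : 0 < K₁) (A : Finset (Fin K₁)) :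
    (Finset.univ.filter fun k : Fin (m * K₁) => gmap m K₁ hK₁ k ∈ A).card = m * A.card := by
  rw [Finset.card_eq_sum_card_fiberwise (f := gmap m K₁ hK₁)
    (s := Finset.univ.filter fun k : Fin (m * K₁) => gmap m K₁ hK₁ k ∈ A) (t := A)
    (fun x hx => (Finset.mem_filter.1 hx).2)]
  rw [Finset.sum_congr rfl (fun a ha => ?_), Finset.sum_const, smul_eq_mul, mul_comm]
  rw [show (Finset.univ.filter fun k : Fin (m*K₁) => gmap m K₁ hK₁ k ∈ A).filter
      (fun k => gmap m K₁ hK₁ k = a) = Finset.univ.filter (fun k => gmap m K₁ hK₁ k = a) by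
    ext k; simp only [Finset.mem_filter, Finset.mem_univ, true_and]
    exact ⟨fun h => h.2, fun h => ⟨h ▸ ha, h⟩⟩]
  exact fiber_card m K₁ hK₁ a

def emb (m K₁ : ℕ) (hm : 0 < m) (a : Fin K₁) : Fin (m * K₁) :=
  ⟨a.val, lt_of_lt_of_le a.isLt (Nat.le_mul_of_pos_left _ hm)⟩

lemma gmap_emb (m K₁ : ℕ) (hK₁ : 0 < K₁) (hm : 0 < m) (a : Fin K₁) :
    gmap m K₁ hK₁ (emb m K₁ hm a) = a := by
  apply Fin.ext; simp [gmap, emb, Nat.mod_eq_of_lt a.isLt]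

lemma pdaIntCols_hcopies {σ : Type*} [DecidableEq σ] {F K₁ : ℕ} (m : ℕ) (hK₁ : 0 < K₁)
    (Q : Fin F → Fin K₁ → Option σ) (s : σ) (f : Fin F) :
    pdaIntCols (hcopies m hK₁ Q) s f
      = Finset.univ.filter fun k => gmap m K₁ hK₁ k ∈ pdaIntCols Q s f := by
  ext k
  simp only [mem_pdaIntCols, Finset.mem_filter, Finset.mem_univ, true_and, hcopies, gmap]


/-- Theorem 5, grouping: if `Q` is a `(G, L₁, K₁, F, Z, S)` MIMO-PDA
with consistency number `μ` whose sum-DoF attains the bound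
`G·K₁·Z/F + G⌈L₁/G⌉` (with `t₁ = K₁Z/F` a positive integer), then for every `m ≥ 1`
and `L ≥ L₁` with `m⌈L₁/G⌉ = ⌈L/G⌉` and `⟨L⟩_G ≥ μ`, the horizontal concatenation of
`m` copies of `Q` is a `(G, L, mK₁, F, Z, S)` MIMO-PDA whose sum-DoF `mK₁(F-Z)/S`
equals `G·m·t₁ + G⌈L/G⌉`. -/
theorem statement2 {σ : Type*} [DecidableEq σ]
    (G L₁ K₁ F Z S μ t₁ m L : ℕ)
    (hG : 0 < G) (hL₁ : 0 < L₁) (hK₁ : 0 < K₁) (hF : 0 < F) (hZ : 0 < Z) (hS : 0 < S)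
    (ht₁pos : 0 < t₁) (hm : 0 < m) (hL₁L : L₁ ≤ L)
    (Q : Fin F → Fin K₁ → Option σ)
    (hQ : IsMIMOPDA G L₁ K₁ F Z S Q)
    (hμ : consistNum Q = μ)
    (ht₁ : t₁ * F = K₁ * Z)
    (hopt : sumDoF K₁ F Z S = (G : ℚ) * K₁ * Z / F + (G : ℚ) * (cdiv L₁ G : ℚ))
    (hceil : m * cdiv L₁ G = cdiv L G)
    (hres : μ ≤ modRes L G) :
    IsMIMOPDA G L (m * K₁) F Z S (hcopies m hK₁ Q) ∧
    sumDoF (m * K₁) F Z S = ((G * m * t₁ + G * cdiv L G : ℕ) : ℚ) := by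
  obtain ⟨hα, hκ, hsym, hC1, hC3, hC4a, hC4b⟩ := hQ
  have hgP : ∀ (f : Fin F) (k : Fin (m * K₁)),
      hcopies m hK₁ Q f k = Q f (gmap m K₁ hK₁ k) := fun _ _ => rfl
  have hcolsQ : ∀ (s : σ) (f f' : Fin F),
      pdaIntCols (hcopies m hK₁ Q) s f = pdaIntCols (hcopies m hK₁ Q) s f' →
      pdaIntCols Q s f = pdaIntCols Q s f' := by
    intro s f f' h
    rw [pdaIntCols_hcopies, pdaIntCols_hcopies] at h
    ext a
    have := Finset.ext_iff.1 h (emb m K₁ hm a)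
    simpa [gmap_emb m K₁ hK₁ hm a] using this
  constructor
  · refine ⟨hα, by simp, ?_, ?_, ?_, ?_, ?_⟩
    · -- symbols
      have hps : pdaSymbols (hcopies m hK₁ Q) = pdaSymbols Q := by
        ext s
        simp only [mem_pdaSymbols]
        constructor
        · rintro ⟨f, k, h⟩; exact ⟨f, gmap m K₁ hK₁ k, h⟩
        · rintro ⟨f, a, h⟩
          exact ⟨f, emb m K₁ hm a, by rw [hgP, gmap_emb m K₁ hK₁ hm a]; exact h⟩
      rw [hps]; exact hsym
    · intro k; exact hC1 (gmap m K₁ hK₁ k)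
    · intro s k; exact hC3 s (gmap m K₁ hK₁ k)
    · rintro s f ⟨k, hk⟩
      rw [pdaIntCols_hcopies, card_filter_gmap, ← hceil]
      exact Nat.mul_le_mul_left m (hC4a s f ⟨gmap m K₁ hK₁ k, hk⟩)
    · intro s k T hT hTs
      by_contra hcon
      push_neg at hcon
      have hall : ∀ f ∈ T, ∀ f' ∈ T, pdaIntCols Q s f = pdaIntCols Q s f' := by
        intro f hf f' hf'
        exact hcolsQ s f f' (hcon f hf f' hf')
      have hmem : T.card ∈ {μ : ℕ | ∃ (s : σ) (k : Fin K₁) (T : Finset (Fin F)),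
          T.card = μ ∧ (∀ f ∈ T, Q f k = some s) ∧
          ∀ f ∈ T, ∀ f' ∈ T, pdaIntCols Q s f = pdaIntCols Q s f'} :=
        ⟨s, gmap m K₁ hK₁ k, T, rfl, fun f hf => hTs f hf, hall⟩
      have hbdd : BddAbove {μ : ℕ | ∃ (s : σ) (k : Fin K₁) (T : Finset (Fin F)),
          T.card = μ ∧ (∀ f ∈ T, Q f k = some s) ∧
          ∀ f ∈ T, ∀ f' ∈ T, pdaIntCols Q s f = pdaIntCols Q s f'} := by
        refine ⟨F, ?_⟩
        rintro x ⟨s', k', T', hT', -, -⟩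
        rw [← hT']
        calc T'.card ≤ (Finset.univ : Finset (Fin F)).card := Finset.card_le_univ T'
          _ = F := by simp
      have : T.card ≤ consistNum Q := le_csSup hbdd hmem
      rw [hμ] at this
      omega
  · -- sum-DoF
    have hF' : (F : ℚ) ≠ 0 := by positivity
    have h1 : sumDoF (m * K₁) F Z S = m * sumDoF K₁ F Z S := by
      unfold sumDoF; push_cast; ring
    rw [h1, hopt]
    have h2 : (K₁ : ℚ) * Z = t₁ * F := by exact_mod_cast ht₁.symm
    have h3 : (m : ℚ) * (cdiv L₁ G : ℚ) = (cdiv L G : ℚ) := by exact_mod_cast hceil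
    push_cast
    field_simp
    linear_combination (m : ℚ) * h2 + (F:ℚ) * h3
end

section
/- Let P be a (G,L,K,F,Z,S) MIMO-PDA in which every integer of [S] occurs exactly G(t + ⌈L/G⌉) times, where t := KZ/F is a positive integer with t < K. Then every row of P contains exactly t stars; moreover, for every s in [S], the subarray P^(s) has exactly t + ⌈L/G⌉ columns, and every row of P^(s) contains exactly ⌈L/G⌉ integer entries and exactly t star entries (so all t stars of such a row of P lie in columns of P^(s)). -/
open Finset

/-- regularity of optimal MIMO-PDAs: if in a `(G,L,K,F,Z,S)`
MIMO-PDA every integer occurs exactly `G(t + ⌈L/G⌉)` times, where `t = KZ/F` is a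
positive integer with `t < K`, then every row of `P` contains exactly `t` stars,
for every `s` the subarray `P^(s)` has exactly `t + ⌈L/G⌉` columns, and every row of
`P^(s)` contains exactly `⌈L/G⌉` integer entries and exactly `t` star entries. -/
theorem statement8 {α κ σ : Type*} [Fintype α] [Fintype κ] [DecidableEq σ]
    (G L K F Z S t : ℕ) (hG : 0 < G) (hL : 0 < L) (hK : 0 < K)
    (hF : 0 < F) (hZ : 0 < Z) (hS : 0 < S)
    (htpos : 0 < t) (htK : t < K) (ht : t * F = K * Z)
    (P : α → κ → Option σ) (hP : IsMIMOPDA G L K F Z S P)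
    (hocc : ∀ s ∈ pdaSymbols P,
      ((Finset.univ : Finset (α × κ)).filter fun p => P p.1 p.2 = some s).card
        = G * (t + cdiv L G)) :
    (∀ f : α, ((Finset.univ : Finset κ).filter fun k => P f k = none).card = t) ∧
    (∀ s ∈ pdaSymbols P, (pdaColsOf P s).card = t + cdiv L G) ∧
    (∀ s ∈ pdaSymbols P, ∀ f : α, (∃ k, P f k = some s) →
      (pdaIntCols P s f).card = cdiv L G ∧
      ((pdaColsOf P s).filter fun k => P f k = none).card = t) := by
  classical
  obtain ⟨hFcard, hKcard, hScard, hC1, hC3, hC4a, hC4b⟩ := hP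
  set c := cdiv L G with hc
  -- membership lemma
  have hmem : ∀ {s : σ} {f : α} {k : κ}, P f k = some s → s ∈ pdaSymbols P := by
    intro s f k h
    unfold pdaSymbols
    rw [Finset.mem_biUnion]
    exact ⟨f, Finset.mem_univ f, Finset.mem_biUnion.2 ⟨k, Finset.mem_univ k, by simp [h]⟩⟩
  have hmem' : ∀ s ∈ pdaSymbols P, ∃ f k, P f k = some s := by
    intro s hs
    unfold pdaSymbols at hs
    rw [Finset.mem_biUnion] at hs
    obtain ⟨f, _, hs⟩ := hs
    rw [Finset.mem_biUnion] at hs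
    obtain ⟨k, _, hs⟩ := hs
    exact ⟨f, k, by simpa using hs⟩
  -- lower bound on number of columns of P^(s)
  have hnlb : ∀ s ∈ pdaSymbols P, t + c ≤ (pdaColsOf P s).card := by
    intro s hs
    have h1 : ((univ : Finset (α × κ)).filter fun p => P p.1 p.2 = some s).card
        = ∑ k : κ, (univ.filter fun f : α => P f k = some s).card := by
      simp only [Finset.card_filter]
      rw [Fintype.sum_prod_type]
      exact Finset.sum_comm
    have h2 : ∑ k : κ, (univ.filter fun f : α => P f k = some s).card
        = ∑ k ∈ pdaColsOf P s, (univ.filter fun f : α => P f k = some s).card := by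
      refine (Finset.sum_subset (Finset.subset_univ _) ?_).symm
      intro k _ hk
      rw [Finset.card_eq_zero, Finset.filter_eq_empty_iff]
      intro f _ hsome
      refine hk ?_
      simp only [pdaColsOf, Finset.mem_filter, Finset.mem_univ, true_and]
      exact ⟨f, hsome⟩
    have h3 : ∑ k ∈ pdaColsOf P s, (univ.filter fun f : α => P f k = some s).card
        ≤ (pdaColsOf P s).card * G := by
      calc ∑ k ∈ pdaColsOf P s, (univ.filter fun f : α => P f k = some s).card
          ≤ ∑ _k ∈ pdaColsOf P s, G := Finset.sum_le_sum fun k _ => hC3 s k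
        _ = (pdaColsOf P s).card * G := by rw [Finset.sum_const, smul_eq_mul]
    have hle : G * (t + c) ≤ (pdaColsOf P s).card * G := by
      rw [← hocc s hs, h1, h2]; exact h3
    rw [mul_comm] at hle
    exact Nat.le_of_mul_le_mul_right hle hG
  -- splitting the columns of P^(s) at a given row
  have hsplit : ∀ (s : σ) (f : α),
      (pdaIntCols P s f).card + ((pdaColsOf P s).filter fun k => P f k = none).card
        = (pdaColsOf P s).card := by
    intro s f
    have := Finset.card_filter_add_card_filter_not
      (s := pdaColsOf P s) (p := fun k => P f k ≠ none)
    simpa [pdaIntCols, not_not] using this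
  have hstarsub : ∀ (s : σ) (f : α),
      ((pdaColsOf P s).filter fun k => P f k = none).card
        ≤ ((univ : Finset κ).filter fun k => P f k = none).card :=
    fun s f => Finset.card_le_card
      (Finset.filter_subset_filter _ (Finset.subset_univ _))
  -- every row has at least t stars
  have hrowlb : ∀ f : α, t ≤ ((univ : Finset κ).filter fun k => P f k = none).card := by
    intro f
    by_cases hf : ∃ k s, P f k = some s
    · obtain ⟨k, s, hks⟩ := hf
      have hs := hmem hks
      have h4a := hC4a s f ⟨k, hks⟩
      have h1 := hnlb s hs
      have h2 := hsplit s f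
      have h3 := hstarsub s f
      omega
    · push_neg at hf
      have hall : ((univ : Finset κ).filter fun k => P f k = none) = univ := by
        rw [Finset.filter_eq_self]
        intro k _
        cases h : P f k with
        | none => rfl
        | some s => exact absurd h (hf k s)
      rw [hall, Finset.card_univ, hKcard]
      omega
  -- total star count
  have htot : ∑ f : α, ((univ : Finset κ).filter fun k => P f k = none).card = t * F := by
    have hcomm : ∑ f : α, ((univ : Finset κ).filter fun k => P f k = none).card
        = ∑ k : κ, ((univ : Finset α).filter fun f => P f k = none).card := by
      simp only [Finset.card_filter]
      exact Finset.sum_comm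
    rw [hcomm]
    simp only [hC1]
    rw [Finset.sum_const, Finset.card_univ, hKcard, smul_eq_mul, ← ht, mul_comm]
  -- every row has exactly t stars
  have hrow : ∀ f : α, ((univ : Finset κ).filter fun k => P f k = none).card = t := by
    have hsum : ∑ _f : α, t
        = ∑ f : α, ((univ : Finset κ).filter fun k => P f k = none).card := by
      rw [htot, Finset.sum_const, Finset.card_univ, hFcard, smul_eq_mul, mul_comm]
    intro f
    exact ((Finset.sum_eq_sum_iff_of_le (fun i _ => hrowlb i)).1 hsum f
      (Finset.mem_univ f)).symm
  -- number of columns of P^(s)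
  have hcols : ∀ s ∈ pdaSymbols P, (pdaColsOf P s).card = t + c := by
    intro s hs
    obtain ⟨f, k, hks⟩ := hmem' s hs
    have h4a := hC4a s f ⟨k, hks⟩
    have h2 := hsplit s f
    have h3 := hstarsub s f
    rw [hrow f] at h3
    have h1 := hnlb s hs
    omega
  refine ⟨hrow, hcols, ?_⟩
  intro s hs f hf
  have h4a := hC4a s f hf
  have h2 := hsplit s f
  have h3 := hstarsub s f
  rw [hrow f] at h3
  rw [hcols s hs] at h2
  omega
end

section
/- Let G, K₁, t₁, τ₁, L₁ be positive integers with ⌈L₁/G⌉ = τ₁, such that τ₁ divides both t₁ and K₁, t₁ + τ₁ < K₁, and 2G ≤ binom(t₁+τ₁−1, t₁). Set Λ₁ = binom(K₁−t₁−1, τ₁−1) and Λ₂ = binom(t₁+τ₁−1, τ₁−1). Then there exists a (G, L₁, K₁, F₁, Z₁, S₁) MIMO-PDA with F₁ = binom(K₁,t₁)·G·Λ₁/gcd(G,Λ₂), Z₁ = binom(K₁−1,t₁−1)·G·Λ₁/gcd(G,Λ₂), and S₁ = (Λ₂/gcd(G,Λ₂))·binom(K₁, t₁+τ₁), having consistency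 number 1 and in which every integer of [S₁] occurs exactly G(t₁+τ₁) times (so its sum-DoF equals G(t₁+τ₁)). -/
open Finset

lemma card_subsets_subtype {ι : Type*} [Fintype ι] [DecidableEq ι] (D : Finset ι) (r : ℕ) :
    Fintype.card {C : Finset ι // C ⊆ D ∧ C.card = r} = D.card.choose r := by
  rw [Fintype.card_subtype]
  have h : (univ.filter fun C : Finset ι => C ⊆ D ∧ C.card = r) = D.powersetCard r := by
    ext C; simp [Finset.mem_powersetCard]
  rw [h, Finset.card_powersetCard]

lemma card_supersets_subtype {ι : Type*} [Fintype ι] [DecidableEq ι] (A : Finset ι) (n : ℕ)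
    (hA : A.card ≤ n) :
    Fintype.card {B : Finset ι // A ⊆ B ∧ B.card = n}
      = (Fintype.card ι - A.card).choose (n - A.card) := by
  have e : {B : Finset ι // A ⊆ B ∧ B.card = n} ≃ {C : Finset ι // C ⊆ Aᶜ ∧ C.card = n - A.card} :=
    { toFun := fun B => ⟨B.1 \ A, by
        refine ⟨fun x hx => ?_, ?_⟩
        · simp only [Finset.mem_sdiff] at hx
          simpa using hx.2
        · rw [Finset.card_sdiff_of_subset B.2.1, B.2.2]⟩
      invFun := fun C => ⟨C.1 ∪ A, Finset.subset_union_right, by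
        rw [Finset.card_union_of_disjoint, C.2.2, Nat.sub_add_cancel hA]
        exact Finset.disjoint_left.mpr fun x hx => by
          have := C.2.1 hx; simpa using this⟩
      left_inv := fun B => Subtype.ext (Finset.sdiff_union_of_subset B.2.1)
      right_inv := fun C => Subtype.ext (by
        apply Finset.union_sdiff_cancel_right
        exact Finset.disjoint_left.mpr fun x hx => by
          have := C.2.1 hx; simpa using this) }
  rw [Fintype.card_congr e, card_subsets_subtype, Finset.card_compl]

lemma keymod (n jj : ℕ) (hn : 0 < n) (hj : jj < n) : ∀ (c a : ℕ), a < n →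
    ((c + a) % n = jj ↔ c % n = (jj + n - a) % n) := by
  intro c a ha
  have hx : c % n < n := Nat.mod_lt _ hn
  have e0 : (c + a) % n = (c % n + a) % n := by
    conv_lhs => rw [Nat.add_mod, Nat.mod_eq_of_lt ha]
  have e1 : (c % n + a) % n = if c % n + a < n then c % n + a else c % n + a - n := by
    split
    · exact Nat.mod_eq_of_lt ‹_›
    · rw [Nat.mod_eq_sub_mod (by omega), Nat.mod_eq_of_lt (by omega)]
  have e2 : (jj + n - a) % n = if a ≤ jj then jj - a else jj + n - a := by
    split
    · have h3 : jj + n - a = (jj - a) + n := by omega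
      rw [h3, Nat.add_mod_right, Nat.mod_eq_of_lt (by omega)]
    · exact Nat.mod_eq_of_lt (by omega)
  rw [e0, e1, e2]
  split <;> split <;> omega

lemma modcount (N n G' jj : ℕ) (hn : 0 < n) (hdvd : n ∣ N) (hj : jj < n) (hG' : G' ≤ n) :
    ((univ : Finset (Fin N × Fin G')).filter
      fun p => ((p.1 : ℕ) + (p.2 : ℕ)) % n = jj).card = (N / n) * G' := by
  obtain ⟨g, rfl⟩ := hdvd
  rw [Nat.mul_div_cancel_left _ hn]
  have hrlt : ∀ a : ℕ, (jj + n - a) % n < n := fun a => Nat.mod_lt _ hn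
  have main : ((univ : Finset (Fin (n*g) × Fin G')).filter
      fun p => ((p.1 : ℕ) + (p.2 : ℕ)) % n = jj).card
      = (univ : Finset (Fin g × Fin G')).card := by
    refine Finset.card_bij'
      (fun p _ => ((⟨(p.1 : ℕ) / n, ?_⟩ : Fin g), p.2))
      (fun q _ => ((⟨(jj + n - (q.2 : ℕ)) % n + (q.1 : ℕ) * n, ?_⟩ : Fin (n * g)), q.2))
      (fun p _ => mem_univ _) ?_ ?_ ?_
    · have := p.1.isLt
      exact (Nat.div_lt_iff_lt_mul hn).mpr (lt_of_lt_of_le this (le_of_eq (mul_comm n g)))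
    · have h1 : (jj + n - (q.2 : ℕ)) % n < n := hrlt _
      have h2 : (q.1 : ℕ) < g := q.1.isLt
      have h3 : (jj + n - (q.2 : ℕ)) % n + (q.1 : ℕ) * n < (1 + (q.1 : ℕ)) * n := by
        rw [add_mul, one_mul]; omega
      exact h3.trans_le (by rw [mul_comm n g]; exact Nat.mul_le_mul_right n (by omega))
    · intro q _
      simp only [mem_filter, mem_univ, true_and]
      have h4 : (jj + n - (q.2:ℕ)) % n + (q.1:ℕ) * n + (q.2:ℕ)
          = ((jj + n - (q.2:ℕ)) % n + (q.2:ℕ)) + (q.1:ℕ) * n := by ring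
      rw [h4, Nat.add_mul_mod_self_right, Nat.mod_add_mod]
      have h5 : jj + n - (q.2:ℕ) + (q.2:ℕ) = jj + n := by
        have := q.2.isLt; omega
      rw [h5, Nat.add_mod_right, Nat.mod_eq_of_lt hj]
    · intro p hp
      simp only [mem_filter, mem_univ, true_and] at hp
      have hmod : (p.1 : ℕ) % n = (jj + n - (p.2:ℕ)) % n :=
        (keymod n jj hn hj _ _ (lt_of_lt_of_le p.2.isLt hG')).mp hp
      refine Prod.ext (Fin.ext ?_) rfl
      show (jj + n - (p.2:ℕ)) % n + ((p.1:ℕ) / n) * n = (p.1 : ℕ)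
      rw [← hmod]
      exact Nat.mod_add_div' _ n
    · intro q _
      refine Prod.ext (Fin.ext ?_) rfl
      show ((jj + n - (q.2:ℕ)) % n + (q.1:ℕ) * n) / n = (q.1 : ℕ)
      rw [Nat.add_mul_div_right _ _ hn, Nat.div_eq_of_lt (hrlt _), zero_add]
  rw [main]
  simp [mul_comm]

/-- the new TST MIMO-PDA `B` of the hybrid construction: under
`⌈L₁/G⌉ = τ₁`, `τ₁ ∣ t₁`, `τ₁ ∣ K₁`, `t₁ + τ₁ < K₁` and `2G ≤ C(t₁+τ₁-1, t₁)`,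
there exists a `(G, L₁, K₁, F₁, Z₁, S₁)` MIMO-PDA with the stated parameters,
consistency number `1`, in which every integer occurs exactly `G(t₁+τ₁)` times. -/
theorem statement10 (G K₁ t₁ τ₁ L₁ F₁ Z₁ S₁ Λ₁ Λ₂ : ℕ)
    (hG : 0 < G) (hK₁ : 0 < K₁) (ht₁ : 0 < t₁) (hτ₁pos : 0 < τ₁) (hL₁ : 0 < L₁)
    (hτ₁ : cdiv L₁ G = τ₁)
    (hd1 : τ₁ ∣ t₁) (hd2 : τ₁ ∣ K₁) (hlt : t₁ + τ₁ < K₁)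
    (hbin : 2 * G ≤ (t₁ + τ₁ - 1).choose t₁)
    (hΛ₁ : Λ₁ = (K₁ - t₁ - 1).choose (τ₁ - 1))
    (hΛ₂ : Λ₂ = (t₁ + τ₁ - 1).choose (τ₁ - 1))
    (hF : F₁ = K₁.choose t₁ * G * Λ₁ / Nat.gcd G Λ₂)
    (hZ : Z₁ = (K₁ - 1).choose (t₁ - 1) * G * Λ₁ / Nat.gcd G Λ₂)
    (hS : S₁ = Λ₂ / Nat.gcd G Λ₂ * K₁.choose (t₁ + τ₁)) :
    ∃ P : Fin F₁ → Fin K₁ → Option (Fin S₁),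
      IsMIMOPDA G L₁ K₁ F₁ Z₁ S₁ P ∧
      consistNum P = 1 ∧
      ∀ s : Fin S₁,
        ((Finset.univ : Finset (Fin F₁ × Fin K₁)).filter
          fun p => P p.1 p.2 = some s).card = G * (t₁ + τ₁) := by
  classical
  -- arithmetic preliminaries
  have hΛ₂t : Λ₂ = (t₁ + τ₁ - 1).choose t₁ := by
    have h1 : (t₁ + τ₁ - 1) - (τ₁ - 1) = t₁ := by omega
    have h2 := Nat.choose_symm (n := t₁ + τ₁ - 1) (k := τ₁ - 1) (by omega)
    rw [h1] at h2
    rw [hΛ₂, ← h2]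
  have hbin' : 2 * G ≤ Λ₂ := by rw [hΛ₂t]; exact hbin
  have hΛ₂pos : 0 < Λ₂ := by omega
  set g := Nat.gcd G Λ₂ with hgdef
  have hgpos : 0 < g := Nat.gcd_pos_of_pos_left _ hG
  obtain ⟨G', hG'⟩ : g ∣ G := Nat.gcd_dvd_left _ _
  obtain ⟨Λ₂', hΛ₂'⟩ : g ∣ Λ₂ := Nat.gcd_dvd_right _ _
  have hG'pos : 0 < G' := Nat.pos_of_ne_zero (by rintro rfl; omega)
  have hΛ₂'pos : 0 < Λ₂' := Nat.pos_of_ne_zero (by rintro rfl; omega)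
  have hG'le : G' ≤ Λ₂' := by
    have h1 : g * G' ≤ g * Λ₂' := by omega
    exact Nat.le_of_mul_le_mul_left h1 hgpos
  have hF' : F₁ = K₁.choose t₁ * (Λ₁ * G') := by
    have h1 : K₁.choose t₁ * G * Λ₁ = g * (K₁.choose t₁ * (Λ₁ * G')) := by rw [hG']; ring
    rw [hF, h1, Nat.mul_div_cancel_left _ hgpos]
  have hZ' : Z₁ = (K₁ - 1).choose (t₁ - 1) * (Λ₁ * G') := by
    have h1 : (K₁ - 1).choose (t₁ - 1) * G * Λ₁
        = g * ((K₁ - 1).choose (t₁ - 1) * (Λ₁ * G')) := by rw [hG']; ring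
    rw [hZ, h1, Nat.mul_div_cancel_left _ hgpos]
  have hS' : S₁ = K₁.choose (t₁ + τ₁) * Λ₂' := by
    rw [hS, hΛ₂', Nat.mul_div_cancel_left _ hgpos, mul_comm]
  have hΛ₁pos : 0 < Λ₁ := by rw [hΛ₁]; exact Nat.choose_pos (by omega)
  have hτK : t₁ + τ₁ ≤ K₁ := le_of_lt hlt
  -- the base equivalences
  have eR : Fin F₁ ≃ ({T : Finset (Fin K₁) // T.card = t₁} × (Fin Λ₁ × Fin G')) :=
    Fintype.equivOfCardEq (by
      simp only [Fintype.card_fin, Fintype.card_prod, Fintype.card_finset_len]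
      rw [hF'])
  have eS : Fin S₁ ≃ ({B : Finset (Fin K₁) // B.card = t₁ + τ₁} × Fin Λ₂') :=
    Fintype.equivOfCardEq (by
      simp only [Fintype.card_fin, Fintype.card_prod, Fintype.card_finset_len]
      rw [hS'])
  have hcardSup : ∀ (T : Finset (Fin K₁)) (k : Fin K₁), T.card = t₁ → k ∉ T →
      Fintype.card {B : Finset (Fin K₁) // insert k T ⊆ B ∧ B.card = t₁ + τ₁} = Λ₁ := by
    intro T k hT hk
    rw [card_supersets_subtype _ _ (by rw [Finset.card_insert_of_notMem hk, hT]; omega)]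
    rw [Finset.card_insert_of_notMem hk, hT, Fintype.card_fin, hΛ₁]
    congr 1 <;> omega
  have θ : ∀ (T : Finset (Fin K₁)), T.card = t₁ → ∀ (k : Fin K₁), k ∉ T →
      ({B : Finset (Fin K₁) // insert k T ⊆ B ∧ B.card = t₁ + τ₁} ≃ Fin Λ₁) :=
    fun T hT k hk => Fintype.equivFinOfCardEq (hcardSup T k hT hk)
  have hcardSub : ∀ (B : Finset (Fin K₁)), B.card = t₁ + τ₁ → ∀ (k : Fin K₁), k ∈ B →
      Fintype.card {T : Finset (Fin K₁) // T ⊆ B.erase k ∧ T.card = t₁} = Λ₂ := by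
    intro B hB k hk
    rw [card_subsets_subtype, Finset.card_erase_of_mem hk, hB, hΛ₂t]
  have ξ : ∀ (B : Finset (Fin K₁)), B.card = t₁ + τ₁ → ∀ (k : Fin K₁), k ∈ B →
      ({T : Finset (Fin K₁) // T ⊆ B.erase k ∧ T.card = t₁} ≃ Fin Λ₂) :=
    fun B hB k hk => Fintype.equivFinOfCardEq (hcardSub B hB k hk)
  -- the plain-data versions of θ and ξ
  obtain ⟨Θ, hΘ⟩ : ∃ Θ : Finset (Fin K₁) → Fin K₁ → Fin Λ₁ → Finset (Fin K₁),
      ∀ (T : Finset (Fin K₁)) (hT : T.card = t₁) (k : Fin K₁) (hk : k ∉ T) (b : Fin Λ₁),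
        Θ T k b = ((θ T hT k hk).symm b).1 := by
    refine ⟨fun T k b => if h : T.card = t₁ ∧ k ∉ T then ((θ T h.1 k h.2).symm b).1 else ∅, ?_⟩
    intro T hT k hk b
    exact dif_pos ⟨hT, hk⟩
  have hΘsub : ∀ (T : Finset (Fin K₁)) (hT : T.card = t₁) (k : Fin K₁) (hk : k ∉ T)
      (b : Fin Λ₁), insert k T ⊆ Θ T k b := by
    intro T hT k hk b
    rw [hΘ T hT k hk b]; exact ((θ T hT k hk).symm b).2.1
  have hΘcard : ∀ (T : Finset (Fin K₁)) (k : Fin K₁) (b : Fin Λ₁),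
      T.card = t₁ → k ∉ T → (Θ T k b).card = t₁ + τ₁ := by
    intro T k b hT hk
    rw [hΘ T hT k hk b]; exact ((θ T hT k hk).symm b).2.2
  have hΘinj : ∀ (T : Finset (Fin K₁)) (hT : T.card = t₁) (k : Fin K₁) (hk : k ∉ T)
      (b b' : Fin Λ₁), Θ T k b = Θ T k b' → b = b' := by
    intro T hT k hk b b' h
    rw [hΘ T hT k hk b, hΘ T hT k hk b'] at h
    exact (θ T hT k hk).symm.injective (Subtype.ext h)
  obtain ⟨Ξ, hΞ⟩ : ∃ Ξ : Finset (Fin K₁) → Fin K₁ → Finset (Fin K₁) → Fin Λ₂,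
      ∀ (B : Finset (Fin K₁)) (hB : B.card = t₁ + τ₁) (k : Fin K₁) (hk : k ∈ B)
        (T : Finset (Fin K₁)) (hT : T ⊆ B.erase k ∧ T.card = t₁),
        Ξ B k T = ξ B hB k hk ⟨T, hT⟩ := by
    refine ⟨fun B k T => if h : (B.card = t₁ + τ₁ ∧ k ∈ B) ∧ (T ⊆ B.erase k ∧ T.card = t₁)
      then ξ B h.1.1 k h.1.2 ⟨T, h.2⟩ else ⟨0, hΛ₂pos⟩, ?_⟩
    intro B hB k hk T hT
    exact dif_pos ⟨⟨hB, hk⟩, hT⟩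
  -- the array
  obtain ⟨P, hP⟩ : ∃ P : Fin F₁ → Fin K₁ → Option (Fin S₁), ∀ f k,
      P f k = if hk : k ∈ (eR f).1.1 then none
        else some (eS.symm (⟨Θ (eR f).1.1 k (eR f).2.1, hΘcard _ _ _ (eR f).1.2 hk⟩,
          ⟨((Ξ (Θ (eR f).1.1 k (eR f).2.1) k (eR f).1.1).1 + ((eR f).2.2).1) % Λ₂',
            Nat.mod_lt _ hΛ₂'pos⟩)) := ⟨_, fun _ _ => rfl⟩
  have hPnone : ∀ f k, P f k = none ↔ k ∈ (eR f).1.1 := by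
    intro f k
    rw [hP]
    by_cases h : k ∈ (eR f).1.1
    · rw [dif_pos h]; simp [h]
    · rw [dif_neg h]; simp [h]
  have hPiff : ∀ (f : Fin F₁) (k : Fin K₁) (B : {B : Finset (Fin K₁) // B.card = t₁ + τ₁})
      (j : Fin Λ₂'),
      P f k = some (eS.symm (B, j)) ↔
        k ∉ (eR f).1.1 ∧ Θ (eR f).1.1 k (eR f).2.1 = B.1 ∧
          ((Ξ B.1 k (eR f).1.1).1 + ((eR f).2.2).1) % Λ₂' = (j : ℕ) := by
    intro f k B j
    rw [hP]
    constructor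
    · intro h
      by_cases hk : k ∈ (eR f).1.1
      · rw [dif_pos hk] at h; exact absurd h (by simp)
      · rw [dif_neg hk] at h
        have h2 := eS.symm.injective (Option.some_injective _ h)
        have h3 := congrArg Prod.fst h2
        have hB1 : Θ (eR f).1.1 k (eR f).2.1 = B.1 := congrArg Subtype.val h3
        have h4 := congrArg Prod.snd h2
        have hj2 : ((Ξ (Θ (eR f).1.1 k (eR f).2.1) k (eR f).1.1).1 + ((eR f).2.2).1) % Λ₂'
            = (j : ℕ) := congrArg Fin.val h4
        refine ⟨hk, hB1, ?_⟩
        rwa [hB1] at hj2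
    · rintro ⟨hk, hB1, hj1⟩
      rw [dif_neg hk]
      refine congrArg _ (congrArg _ (Prod.ext (Subtype.ext hB1) (Fin.ext ?_)))
      show ((Ξ (Θ (eR f).1.1 k (eR f).2.1) k (eR f).1.1).1 + ((eR f).2.2).1) % Λ₂' = (j : ℕ)
      rw [hB1]; exact hj1
  -- building rows that contain a given symbol
  obtain ⟨row, hrowdef⟩ : ∃ row : ∀ (B : {B : Finset (Fin K₁) // B.card = t₁ + τ₁})
      (k : Fin K₁), k ∈ B.1 → Fin Λ₂ → Fin G' → Fin F₁,
      ∀ B k hkB c a, row B k hkB c a = eR.symm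
        (⟨((ξ B.1 B.2 k hkB).symm c).1, ((ξ B.1 B.2 k hkB).symm c).2.2⟩,
         θ ((ξ B.1 B.2 k hkB).symm c).1 ((ξ B.1 B.2 k hkB).symm c).2.2 k
            (Finset.subset_erase.mp ((ξ B.1 B.2 k hkB).symm c).2.1).2
            ⟨B.1, Finset.insert_subset hkB
              (Finset.subset_erase.mp ((ξ B.1 B.2 k hkB).symm c).2.1).1, B.2⟩,
         a) := ⟨_, fun _ _ _ _ _ => rfl⟩
  have hrowP : ∀ (B : {B : Finset (Fin K₁) // B.card = t₁ + τ₁}) (k : Fin K₁)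
      (hkB : k ∈ B.1) (c : Fin Λ₂) (a : Fin G'),
      P (row B k hkB c a) k
        = some (eS.symm (B, ⟨((c : ℕ) + (a : ℕ)) % Λ₂', Nat.mod_lt _ hΛ₂'pos⟩)) := by
    intro B k hkB c a
    rw [hrowdef]
    refine (hPiff _ k B _).mpr ?_
    rw [Equiv.apply_symm_apply]
    refine ⟨(Finset.subset_erase.mp ((ξ B.1 B.2 k hkB).symm c).2.1).2, ?_, ?_⟩
    · rw [hΘ _ ((ξ B.1 B.2 k hkB).symm c).2.2 k
        (Finset.subset_erase.mp ((ξ B.1 B.2 k hkB).symm c).2.1).2, Equiv.symm_apply_apply]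
    · show ((Ξ B.1 k ((ξ B.1 B.2 k hkB).symm c).1).1 + (a : ℕ)) % Λ₂' = _
      rw [hΞ B.1 B.2 k hkB ((ξ B.1 B.2 k hkB).symm c).1
        ⟨((ξ B.1 B.2 k hkB).symm c).2.1, ((ξ B.1 B.2 k hkB).symm c).2.2⟩]
      have he : (⟨((ξ B.1 B.2 k hkB).symm c).1,
          ⟨((ξ B.1 B.2 k hkB).symm c).2.1, ((ξ B.1 B.2 k hkB).symm c).2.2⟩⟩ :
          {T : Finset (Fin K₁) // T ⊆ B.1.erase k ∧ T.card = t₁})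
          = (ξ B.1 B.2 k hkB).symm c := Subtype.ext rfl
      rw [he, Equiv.apply_symm_apply]
  have exRow : ∀ (B : {B : Finset (Fin K₁) // B.card = t₁ + τ₁}) (j : Fin Λ₂') (k : Fin K₁),
      k ∈ B.1 → ∃ f, P f k = some (eS.symm (B, j)) := by
    intro B j k hkB
    have hle : Λ₂' ≤ Λ₂ := by
      calc Λ₂' ≤ g * Λ₂' := Nat.le_mul_of_pos_left _ hgpos
      _ = Λ₂ := hΛ₂'.symm
    refine ⟨row B k hkB ⟨(j : ℕ), lt_of_lt_of_le j.isLt hle⟩ ⟨0, hG'pos⟩,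
      (hrowP B k hkB _ _).trans ?_⟩
    exact congrArg _ (congrArg _ (congrArg _ (Fin.ext (by
      show ((j : ℕ) + 0) % Λ₂' = (j : ℕ)
      simp [Nat.mod_eq_of_lt j.isLt]))))
  -- symbol count in a column
  have hcount : ∀ (B : {B : Finset (Fin K₁) // B.card = t₁ + τ₁}) (j : Fin Λ₂') (k : Fin K₁),
      k ∈ B.1 → (univ.filter fun f => P f k = some (eS.symm (B, j))).card = G := by
    intro B j k hkB
    have hbij : ((univ : Finset (Fin Λ₂ × Fin G')).filter
        fun p => ((p.1 : ℕ) + (p.2 : ℕ)) % Λ₂' = (j : ℕ)).card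
        = (univ.filter fun f => P f k = some (eS.symm (B, j))).card := by
      refine Finset.card_bij (fun p _ => row B k hkB p.1 p.2) ?_ ?_ ?_
      · intro p hp
        simp only [mem_filter, mem_univ, true_and] at hp ⊢
        rw [hrowP B k hkB p.1 p.2]
        exact congrArg _ (congrArg _ (congrArg _ (Fin.ext hp)))
      · intro p hp p' hp' heq0
        have heq : row B k hkB p.1 p.2 = row B k hkB p'.1 p'.2 := heq0
        rw [hrowdef, hrowdef] at heq
        have h0 := eR.symm.injective heq
        have h1 : ((ξ B.1 B.2 k hkB).symm p.1).1 = ((ξ B.1 B.2 k hkB).symm p'.1).1 :=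
          congrArg (fun z : ({T : Finset (Fin K₁) // T.card = t₁} × (Fin Λ₁ × Fin G')) =>
            z.1.1) h0
        have hc : p.1 = p'.1 :=
          (ξ B.1 B.2 k hkB).symm.injective (Subtype.ext h1)
        have ha : p.2 = p'.2 :=
          congrArg (fun z : ({T : Finset (Fin K₁) // T.card = t₁} × (Fin Λ₁ × Fin G')) =>
            z.2.2) h0
        exact Prod.ext hc ha
      · intro f hf
        simp only [mem_filter, mem_univ, true_and] at hf
        obtain ⟨hk, hB1, hj1⟩ := (hPiff f k B j).mp hf
        have hTB : (eR f).1.1 ⊆ B.1 := by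
          have h2 := hΘsub _ (eR f).1.2 _ hk (eR f).2.1
          rw [hB1] at h2
          exact (Finset.insert_subset_iff.mp h2).2
        have hsub : (eR f).1.1 ⊆ B.1.erase k := Finset.subset_erase.mpr ⟨hTB, hk⟩
        refine ⟨(ξ B.1 B.2 k hkB ⟨(eR f).1.1, hsub, (eR f).1.2⟩, (eR f).2.2), ?_, ?_⟩
        · simp only [mem_filter, mem_univ, true_and]
          rw [← hΞ B.1 B.2 k hkB (eR f).1.1 ⟨hsub, (eR f).1.2⟩]
          exact hj1
        · show row B k hkB _ _ = f
          rw [hrowdef]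
          apply eR.injective
          rw [Equiv.apply_symm_apply, Equiv.symm_apply_apply]
          refine Prod.ext (Subtype.ext rfl) (Prod.ext ?_ rfl)
          have h3 : ((θ (eR f).1.1 (eR f).1.2 k hk).symm (eR f).2.1)
              = ⟨B.1, Finset.insert_subset hkB hTB, B.2⟩ := by
            apply Subtype.ext
            rw [← hΘ _ (eR f).1.2 _ hk]
            exact hB1
          have h4 := congrArg (θ (eR f).1.1 (eR f).1.2 k hk) h3
          rw [Equiv.apply_symm_apply] at h4
          exact h4.symm
    rw [← hbij, modcount Λ₂ Λ₂' G' (j : ℕ) hΛ₂'pos ⟨g, by rw [hΛ₂']; ring⟩ j.isLt hG'le,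
      hΛ₂', mul_comm g Λ₂', Nat.mul_div_cancel_left _ hΛ₂'pos, ← hG']
  have hcount0 : ∀ (B : {B : Finset (Fin K₁) // B.card = t₁ + τ₁}) (j : Fin Λ₂') (k : Fin K₁),
      k ∉ B.1 → (univ.filter fun f => P f k = some (eS.symm (B, j))).card = 0 := by
    intro B j k hkB
    rw [Finset.card_eq_zero, Finset.filter_eq_empty_iff]
    intro f _ hf
    obtain ⟨hk, hB1, -⟩ := (hPiff f k B j).mp hf
    have h2 := hΘsub _ (eR f).1.2 _ hk (eR f).2.1
    rw [hB1] at h2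
    exact hkB (h2 (Finset.mem_insert_self k _))
  -- representation of symbols
  have hrep : ∀ s : Fin S₁, ∃ (B : {B : Finset (Fin K₁) // B.card = t₁ + τ₁}) (j : Fin Λ₂'),
      s = eS.symm (B, j) :=
    fun s => ⟨(eS s).1, (eS s).2, by rw [Prod.mk.eta, Equiv.symm_apply_apply]⟩
  -- the columns containing a symbol
  have hcols : ∀ (B : {B : Finset (Fin K₁) // B.card = t₁ + τ₁}) (j : Fin Λ₂'),
      pdaColsOf P (eS.symm (B, j)) = B.1 := by
    intro B j
    ext k
    simp only [pdaColsOf, mem_filter, mem_univ, true_and]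
    constructor
    · rintro ⟨f, hf⟩
      obtain ⟨hk, hB1, -⟩ := (hPiff f k B j).mp hf
      have h2 := hΘsub _ (eR f).1.2 _ hk (eR f).2.1
      rw [hB1] at h2
      exact h2 (Finset.mem_insert_self k _)
    · intro hkB
      exact exRow B j k hkB
  have hintcols : ∀ (B : {B : Finset (Fin K₁) // B.card = t₁ + τ₁}) (j : Fin Λ₂') (f : Fin F₁),
      pdaIntCols P (eS.symm (B, j)) f = B.1 \ (eR f).1.1 := by
    intro B j f
    show (pdaColsOf P (eS.symm (B, j))).filter _ = _
    rw [hcols B j]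
    ext k
    simp only [Finset.mem_filter, Finset.mem_sdiff, ne_eq, hPnone f k]
  -- distinctness of rows sharing a symbol in a column with equal integer-column sets
  have hdistinct : ∀ (B : {B : Finset (Fin K₁) // B.card = t₁ + τ₁}) (j : Fin Λ₂')
      (k : Fin K₁) (f f' : Fin F₁),
      P f k = some (eS.symm (B, j)) → P f' k = some (eS.symm (B, j)) →
      pdaIntCols P (eS.symm (B, j)) f = pdaIntCols P (eS.symm (B, j)) f' → f = f' := by
    intro B j k f f' hf hf' hpi
    obtain ⟨hk, hB1, hj1⟩ := (hPiff f k B j).mp hf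
    obtain ⟨hk', hB1', hj1'⟩ := (hPiff f' k B j).mp hf'
    have hTB : (eR f).1.1 ⊆ B.1 := by
      have h2 := hΘsub _ (eR f).1.2 _ hk (eR f).2.1
      rw [hB1] at h2
      exact (Finset.insert_subset_iff.mp h2).2
    have hTB' : (eR f').1.1 ⊆ B.1 := by
      have h2 := hΘsub _ (eR f').1.2 _ hk' (eR f').2.1
      rw [hB1'] at h2
      exact (Finset.insert_subset_iff.mp h2).2
    rw [hintcols B j f, hintcols B j f'] at hpi
    have hTT : (eR f).1.1 = (eR f').1.1 := by
      calc (eR f).1.1 = B.1 \ (B.1 \ (eR f).1.1) := (Finset.sdiff_sdiff_eq_self hTB).symm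
        _ = B.1 \ (B.1 \ (eR f').1.1) := by rw [hpi]
        _ = (eR f').1.1 := Finset.sdiff_sdiff_eq_self hTB'
    have hb : (eR f).2.1 = (eR f').2.1 := by
      refine hΘinj _ (eR f).1.2 _ hk _ _ ?_
      rw [hB1]
      rw [show ((eR f).1.1 : Finset (Fin K₁)) = (eR f').1.1 from hTT]
      exact hB1'.symm
    have ha : (eR f).2.2 = (eR f').2.2 := by
      rw [← hTT] at hj1'
      have hmodeq : ((eR f).2.2 : ℕ) ≡ ((eR f').2.2 : ℕ) [MOD Λ₂'] :=
        Nat.ModEq.add_left_cancel' _ (hj1.trans hj1'.symm)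
      exact Fin.ext (hmodeq.eq_of_lt_of_lt
        (lt_of_lt_of_le (eR f).2.2.isLt hG'le)
        (lt_of_lt_of_le (eR f').2.2.isLt hG'le))
    apply eR.injective
    exact Prod.ext (Subtype.ext hTT) (Prod.ext hb ha)
  -- stars per column
  have hstars : ∀ k : Fin K₁, (univ.filter fun f : Fin F₁ => P f k = none).card = Z₁ := by
    intro k
    have h1 : (univ.filter fun f : Fin F₁ => P f k = none)
        = univ.filter (fun f => k ∈ (eR f).1.1) :=
      Finset.filter_congr (fun f _ => by rw [hPnone f k])
    rw [h1, ← Fintype.card_subtype]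
    rw [Fintype.card_congr (eR.subtypeEquiv
      (q := fun x : {T : Finset (Fin K₁) // T.card = t₁} × (Fin Λ₁ × Fin G') => k ∈ x.1.1)
      (fun f => Iff.rfl))]
    rw [Fintype.card_congr (Equiv.prodSubtypeFstEquivSubtypeProd
      (p := fun T : {T : Finset (Fin K₁) // T.card = t₁} => k ∈ T.1))]
    rw [Fintype.card_prod]
    have e2 : {T : {T : Finset (Fin K₁) // T.card = t₁} // k ∈ T.1}
        ≃ {T : Finset (Fin K₁) // {k} ⊆ T ∧ T.card = t₁} :=
      { toFun := fun x => ⟨x.1.1, Finset.singleton_subset_iff.mpr x.2, x.1.2⟩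
        invFun := fun y => ⟨⟨y.1, y.2.2⟩, Finset.singleton_subset_iff.mp y.2.1⟩
        left_inv := fun _ => rfl
        right_inv := fun _ => rfl }
    rw [Fintype.card_congr e2, card_supersets_subtype _ _
      (by rw [Finset.card_singleton]; omega)]
    simp only [Finset.card_singleton, Fintype.card_fin, Fintype.card_prod]
    rw [hZ']
  -- every symbol occurs
  have hsym : pdaSymbols P = (univ : Finset (Fin S₁)) := by
    apply Finset.eq_univ_iff_forall.mpr
    intro s
    obtain ⟨B, j, rfl⟩ := hrep s
    obtain ⟨k, hk⟩ := Finset.card_pos.mp (show 0 < (B.1).card by rw [B.2]; omega)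
    obtain ⟨f, hf⟩ := exRow B j k hk
    simp only [pdaSymbols, Finset.mem_biUnion, mem_univ, true_and]
    exact ⟨f, k, by simp [hf]⟩
  -- total count of a symbol
  have htot : ∀ s : Fin S₁,
      ((Finset.univ : Finset (Fin F₁ × Fin K₁)).filter
        fun p => P p.1 p.2 = some s).card = G * (t₁ + τ₁) := by
    intro s
    obtain ⟨B, j, rfl⟩ := hrep s
    rw [Finset.card_eq_sum_card_fiberwise
      (f := Prod.snd) (t := (univ : Finset (Fin K₁))) (fun x _ => mem_univ _)]
    have hstep : ∀ k : Fin K₁,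
        (((Finset.univ : Finset (Fin F₁ × Fin K₁)).filter
          fun p => P p.1 p.2 = some (eS.symm (B, j))).filter fun p => p.2 = k).card
        = (univ.filter fun f => P f k = some (eS.symm (B, j))).card := by
      intro k
      refine Finset.card_bij (fun p _ => p.1) ?_ ?_ ?_
      · intro p hp
        simp only [mem_filter, mem_univ, true_and] at hp ⊢
        rw [← hp.2]
        exact hp.1
      · intro p hp p' hp' heq
        simp only [mem_filter, mem_univ, true_and] at hp hp'
        exact Prod.ext heq (hp.2.trans hp'.2.symm)
      · intro f hf
        simp only [mem_filter, mem_univ, true_and] at hf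
        exact ⟨(f, k), by simp [hf], rfl⟩
    rw [Finset.sum_congr rfl (fun k _ => hstep k)]
    have hval : ∀ k : Fin K₁, (univ.filter fun f => P f k = some (eS.symm (B, j))).card
        = if k ∈ B.1 then G else 0 := by
      intro k
      by_cases hkB : k ∈ B.1
      · rw [if_pos hkB, hcount B j k hkB]
      · rw [if_neg hkB, hcount0 B j k hkB]
    rw [Finset.sum_congr rfl (fun k _ => hval k), Finset.sum_ite_mem, Finset.univ_inter,
      Finset.sum_const, smul_eq_mul, B.2, mul_comm]
  -- positive residue
  have hmodRes : 0 < modRes L₁ G := by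
    unfold modRes
    split
    · exact hG
    · exact Nat.pos_of_ne_zero (fun h0 => ‹¬ _› (Nat.dvd_of_mod_eq_zero h0))
  have hS₁pos : 0 < S₁ := by
    rw [hS']
    exact Nat.mul_pos (Nat.choose_pos hτK) hΛ₂'pos
  -- one particular entry
  obtain ⟨B₀set, -, hB₀card⟩ := Finset.exists_subset_card_eq
    (s := (univ : Finset (Fin K₁))) (n := t₁ + τ₁)
    (by rw [Finset.card_univ, Fintype.card_fin]; exact hτK)
  obtain ⟨k₀, hk₀⟩ := Finset.card_pos.mp (show 0 < B₀set.card by rw [hB₀card]; omega)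
  obtain ⟨f₀, hf₀⟩ := exRow ⟨B₀set, hB₀card⟩ ⟨0, hΛ₂'pos⟩ k₀ hk₀
  -- the consistency number
  have hub : ∀ μ ∈ {μ : ℕ | ∃ (s : Fin S₁) (k : Fin K₁) (T : Finset (Fin F₁)), T.card = μ ∧
      (∀ f ∈ T, P f k = some s) ∧
      ∀ f ∈ T, ∀ f' ∈ T, pdaIntCols P s f = pdaIntCols P s f'}, μ ≤ 1 := by
    intro μ hμ
    by_contra hc
    push_neg at hc
    obtain ⟨s, k, T, hTc, hall, hcons⟩ := hμ
    obtain ⟨B, j, rfl⟩ := hrep s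
    obtain ⟨f, hf, f', hf', hne⟩ := Finset.one_lt_card.mp (by omega : 1 < T.card)
    exact hne (hdistinct B j k f f' (hall f hf) (hall f' hf') (hcons f hf f' hf'))
  have hconsist : consistNum P = 1 := by
    unfold consistNum
    apply le_antisymm
    · refine csSup_le ⟨1, ?_⟩ hub
      exact ⟨eS.symm (⟨B₀set, hB₀card⟩, ⟨0, hΛ₂'pos⟩), k₀, {f₀}, Finset.card_singleton _,
        by intro f hf; rw [Finset.mem_singleton] at hf; rw [hf]; exact hf₀,
        by intro f hf f' hf'; rw [Finset.mem_singleton] at hf hf'; rw [hf, hf']⟩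
    · refine le_csSup ⟨1, hub⟩ ?_
      exact ⟨eS.symm (⟨B₀set, hB₀card⟩, ⟨0, hΛ₂'pos⟩), k₀, {f₀}, Finset.card_singleton _,
        by intro f hf; rw [Finset.mem_singleton] at hf; rw [hf]; exact hf₀,
        by intro f hf f' hf'; rw [Finset.mem_singleton] at hf hf'; rw [hf, hf']⟩
  -- assemble everything
  refine ⟨P, ⟨Fintype.card_fin _, Fintype.card_fin _, ?_, hstars, ?_, ?_, ?_⟩, hconsist, htot⟩
  · rw [hsym, Finset.card_univ, Fintype.card_fin]
  · -- C3
    intro s k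
    obtain ⟨B, j, rfl⟩ := hrep s
    by_cases hkB : k ∈ B.1
    · rw [hcount B j k hkB]
    · rw [hcount0 B j k hkB]; omega
  · -- C4 (a)
    intro s f hex
    obtain ⟨B, j, rfl⟩ := hrep s
    obtain ⟨k, hk⟩ := hex
    obtain ⟨hknot, hB1, -⟩ := (hPiff f k B j).mp hk
    have hTB : (eR f).1.1 ⊆ B.1 := by
      have h2 := hΘsub _ (eR f).1.2 _ hknot (eR f).2.1
      rw [hB1] at h2
      exact (Finset.insert_subset_iff.mp h2).2
    rw [hintcols B j f, Finset.card_sdiff_of_subset hTB, B.2, (eR f).1.2, hτ₁]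
    omega
  · -- C4 (b)
    intro s k T hTcard hall
    obtain ⟨B, j, rfl⟩ := hrep s
    obtain ⟨f, hf, f', hf', hne⟩ := Finset.one_lt_card.mp (by omega : 1 < T.card)
    exact ⟨f, hf, f', hf', fun heq =>
      hne (hdistinct B j k f f' (hall f hf) (hall f' hf') heq)⟩
end

section
/- For all positive integers K, t, τ with t + τ ≤ K, the identity K · binom(K−1, t) · binom(K−t−1, τ−1) = (t+τ) · binom(K, t+τ) · binom(t+τ−1, t) holds. Consequently, for any positive integer G, setting F = binom(K,t)·binom(K−t−1, τ−1)·G, Z = binom(K−1,t−1)·binom(K−t−1, τ−1)·G, and S = binom(K, t+τ)·binom(t+τ−1, t), one has K(F−Z)/S = G(t+τ); that is, the TST MIMO-PDA parameters achieve sum-DoF G·t + G⌈L/G⌉ whenever τ = ⌈L/G⌉, which is the maximum value allowed by the sum-DoF upper bound K(F−Z)/S ≤ GKZ/F + G⌈L/G⌉. -/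
open Finset

/-- counting identity behind the TST sum-DoF: for positive
integers `K, t, τ` with `t + τ ≤ K`,
`K·C(K-1,t)·C(K-t-1,τ-1) = (t+τ)·C(K,t+τ)·C(t+τ-1,t)`; consequently the TST
parameters `F, Z, S` satisfy `K(F-Z)/S = G(t+τ)`, which equals
`Gt + G⌈L/G⌉` whenever `τ = ⌈L/G⌉`. -/
theorem statement15 (K t τ : ℕ) (hK : 0 < K) (ht : 0 < t) (hτ : 0 < τ)
    (h : t + τ ≤ K) :
    K * (K - 1).choose t * (K - t - 1).choose (τ - 1)
      = (t + τ) * K.choose (t + τ) * (t + τ - 1).choose t ∧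
    (∀ G : ℕ, 0 < G →
      sumDoF K (K.choose t * (K - t - 1).choose (τ - 1) * G)
        ((K - 1).choose (t - 1) * (K - t - 1).choose (τ - 1) * G)
        (K.choose (t + τ) * (t + τ - 1).choose t) = ((G * (t + τ) : ℕ) : ℚ)) ∧
    (∀ G L : ℕ, 0 < G → 0 < L → cdiv L G = τ →
      sumDoF K (K.choose t * (K - t - 1).choose (τ - 1) * G)
        ((K - 1).choose (t - 1) * (K - t - 1).choose (τ - 1) * G)
        (K.choose (t + τ) * (t + τ - 1).choose t)
        = ((G * t + G * cdiv L G : ℕ) : ℚ)) := by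
  have h1 : t ≤ t + τ - 1 := by omega
  have h2 : t + τ - 1 ≤ K - 1 := by omega
  have cm := Nat.choose_mul (n := K - 1) h1
  have e1 : K - 1 - t = K - t - 1 := by omega
  have e2 : t + τ - 1 - t = τ - 1 := by omega
  rw [e1, e2] at cm
  have succ : K * (K - 1).choose (t + τ - 1) = K.choose (t + τ) * (t + τ) := by
    have := Nat.add_one_mul_choose_eq (K - 1) (t + τ - 1)
    have eK : K - 1 + 1 = K := by omega
    have eT : t + τ - 1 + 1 = t + τ := by omega
    rwa [eK, eT] at this
  have key : K * (K - 1).choose t * (K - t - 1).choose (τ - 1)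
      = (t + τ) * K.choose (t + τ) * (t + τ - 1).choose t := by
    calc K * (K - 1).choose t * (K - t - 1).choose (τ - 1)
        = K * ((K - 1).choose t * (K - t - 1).choose (τ - 1)) := by ring
      _ = K * ((K - 1).choose (t + τ - 1) * (t + τ - 1).choose t) := by rw [← cm]
      _ = (K * (K - 1).choose (t + τ - 1)) * (t + τ - 1).choose t := by ring
      _ = (K.choose (t + τ) * (t + τ)) * (t + τ - 1).choose t := by rw [succ]
      _ = (t + τ) * K.choose (t + τ) * (t + τ - 1).choose t := by ring
  have hSpos : 0 < K.choose (t + τ) * (t + τ - 1).choose t :=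
    Nat.mul_pos (Nat.choose_pos h) (Nat.choose_pos h1)
  have pascal : K.choose t = (K - 1).choose (t - 1) + (K - 1).choose t := by
    have := Nat.choose_succ_succ (K - 1) (t - 1)
    have eK : K - 1 + 1 = K := by omega
    have eT : t - 1 + 1 = t := by omega
    simp only [Nat.succ_eq_add_one] at this
    rwa [eK, eT] at this
  have main : ∀ G : ℕ, 0 < G →
      sumDoF K (K.choose t * (K - t - 1).choose (τ - 1) * G)
        ((K - 1).choose (t - 1) * (K - t - 1).choose (τ - 1) * G)
        (K.choose (t + τ) * (t + τ - 1).choose t) = ((G * (t + τ) : ℕ) : ℚ) := by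
    intro G hG
    set C := (K - t - 1).choose (τ - 1)
    have hsub : K.choose t * C * G - (K - 1).choose (t - 1) * C * G
        = (K - 1).choose t * C * G := by
      have : K.choose t * C * G
          = (K - 1).choose (t - 1) * C * G + (K - 1).choose t * C * G := by
        rw [pascal]; ring
      rw [this, Nat.add_sub_cancel_left]
    have hnum : K * ((K - 1).choose t * C * G)
        = (K.choose (t + τ) * (t + τ - 1).choose t) * (G * (t + τ)) := by
      calc K * ((K - 1).choose t * C * G)
          = (K * (K - 1).choose t * C) * G := by ring
        _ = ((t + τ) * K.choose (t + τ) * (t + τ - 1).choose t) * G := by rw [key]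
        _ = (K.choose (t + τ) * (t + τ - 1).choose t) * (G * (t + τ)) := by ring
    unfold sumDoF
    rw [hsub, hnum]
    have hS : ((K.choose (t + τ) * (t + τ - 1).choose t : ℕ) : ℚ) ≠ 0 := by
      exact_mod_cast hSpos.ne'
    push_cast
    push_cast at hS
    field_simp
    exact div_self hS
  refine ⟨key, main, ?_⟩
  intro G L hG hL hcd
  rw [hcd, ← Nat.mul_add, main G hG]
end
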